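/- arXiv:2108.00050 — 2 statements merged into one kernel-verified Lean document; each statement's English description precedes it below -/
import Mathlib

section
/- In the lazy tournament of a trivalent tree T with n+3 labeled leaves, the sequence i_1, i_2, ..., i_n of losers (the smaller elements of the pairs that face off, in the order the rounds are played) is weakly decreasing: i_1 ≥ i_2 ≥ ··· ≥ i_n. -/
open SimpleGraph

/-- A candidate leaf-labeled graph on vertex set `Fin V` with `L` labeled leaves. -/
structure PreTree (L V : ℕ) where
  adj : Fin V → Fin V → Bool
  symm' : ∀ u v, adj u v = adj v u
  loopless' : ∀ v, adj v v = false
  leaf : Fin L → Fin V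

def PreTree.G {L V : ℕ} (T : PreTree L V) : SimpleGraph (Fin V) where
  Adj u v := T.adj u v = true
  symm := ⟨fun u v h => by show T.adj v u = true; rw [T.symm']; exact h⟩
  loopless := ⟨fun v h => by change T.adj v v = true at h; rw [T.loopless' v] at h; exact Bool.noConfusion h⟩

instance {L V : ℕ} (T : PreTree L V) : DecidableRel T.G.Adj :=
  fun u v => inferInstanceAs (Decidable (T.adj u v = true))

/-- `T` is a trivalent tree with leaves labeled bijectively by `Fin L`. -/
def PreTree.IsTrivalent {L V : ℕ} (T : PreTree L V) : Prop :=
  T.G.IsTree ∧ (∀ v, T.G.degree v = 1 ∨ T.G.degree v = 3) ∧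
    Function.Injective T.leaf ∧ (∀ i, T.G.degree (T.leaf i) = 1) ∧
    (∀ v, T.G.degree v = 1 → ∃ i, T.leaf i = v)

/-- Label-preserving isomorphism of leaf-labeled graphs. -/
def PreTree.Iso {L V : ℕ} (T T' : PreTree L V) : Prop :=
  ∃ σ : Fin V ≃ Fin V, (∀ u v, T'.adj (σ u) (σ v) = T.adj u v) ∧ ∀ i, σ (T.leaf i) = T'.leaf i

/-- Leaves `a = 0` and `b = 1` share a common (internal) vertex. -/
def PreTree.ABAdj {n V : ℕ} (T : PreTree (n+3) V) : Prop :=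
  ∃ v, T.G.Adj (T.leaf 0) v ∧ T.G.Adj (T.leaf 1) v

/-- Number of isomorphism classes of leaf-labeled graphs satisfying `P`. -/
noncomputable def classCount {L V : ℕ} (P : PreTree L V → Prop) : ℕ :=
  Nat.card (Quot fun (T T' : {T : PreTree L V // P T}) => PreTree.Iso T.1 T'.1)

/-- `w` separates `x` from `y` in `G`: every walk from `x` to `y` passes through `w`. -/
def Separates {V : Type*} (G : SimpleGraph V) (w x y : V) : Prop :=
  ∀ p : G.Walk x y, w ∈ p.support

/-- The laziness rule applies: the unlabeled edge `E` is adjacent to a labeled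
edge carrying a label `u ≠ j` with `u > i`. -/
def LazyApplies {n : ℕ} (T : PreTree (n+3) (2*n+4))
    (lab : Sym2 (Fin (2*n+4)) → Option (Fin (n+3)))
    (E : Sym2 (Fin (2*n+4))) (i j : Fin (n+3)) : Prop :=
  ∃ (e : Sym2 (Fin (2*n+4))) (u : Fin (n+3)) (v : Fin (2*n+4)),
    e ∈ T.G.edgeSet ∧ v ∈ e ∧ v ∈ E ∧ e ≠ E ∧ lab e = some u ∧ u ≠ j ∧ i < u

/-- A run of the lazy tournament on a tree with `n+3` leaves (labels ordered
`a = 0 < b = 1 < c = 2 < 1 = 3 < ⋯ < n = n+2` as elements of `Fin (n+3)`).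
`lab t` is the edge labeling before round `t`; round `t` has `loser t < winner t`
on adjacent labeled edges `loserE t`, `winnerE t` sharing vertex `vtx t` with the
unlabeled edge `newE t`, the pair having the maximal smaller label, and `newE t`
gets labeled according to the laziness rule. -/
structure Run (n : ℕ) (T : PreTree (n+3) (2*n+4)) where
  lab : ℕ → Sym2 (Fin (2*n+4)) → Option (Fin (n+3))
  loser : Fin n → Fin (n+3)
  winner : Fin n → Fin (n+3)
  loserE : Fin n → Sym2 (Fin (2*n+4))
  winnerE : Fin n → Sym2 (Fin (2*n+4))
  newE : Fin n → Sym2 (Fin (2*n+4))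
  vtx : Fin n → Fin (2*n+4)
  init_leaf : ∀ (i : Fin (n+3)) (w : Fin (2*n+4)), T.G.Adj (T.leaf i) w →
    lab 0 s(T.leaf i, w) = some i
  init_other : ∀ e : Sym2 (Fin (2*n+4)), (∀ i : Fin (n+3), T.leaf i ∉ e) → lab 0 e = none
  init_nonedge : ∀ e, e ∉ T.G.edgeSet → lab 0 e = none
  lt_lw : ∀ t, loser t < winner t
  loserE_mem : ∀ t, loserE t ∈ T.G.edgeSet
  winnerE_mem : ∀ t, winnerE t ∈ T.G.edgeSet
  newE_mem : ∀ t, newE t ∈ T.G.edgeSet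
  lab_loserE : ∀ t, lab t.1 (loserE t) = some (loser t)
  lab_winnerE : ∀ t, lab t.1 (winnerE t) = some (winner t)
  vtx_mem : ∀ t, vtx t ∈ loserE t ∧ vtx t ∈ winnerE t ∧ vtx t ∈ newE t
  edges_distinct : ∀ t, loserE t ≠ winnerE t ∧ loserE t ≠ newE t ∧ winnerE t ≠ newE t
  newE_unlabeled : ∀ t, lab t.1 (newE t) = none
  max_rule : ∀ (t : Fin n) (e1 e2 e3 : Sym2 (Fin (2*n+4))) (i j : Fin (n+3)) (v : Fin (2*n+4)),
    e1 ∈ T.G.edgeSet → e2 ∈ T.G.edgeSet → e3 ∈ T.G.edgeSet →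
    lab t.1 e1 = some i → lab t.1 e2 = some j → lab t.1 e3 = none → i < j →
    v ∈ e1 → v ∈ e2 → v ∈ e3 → e1 ≠ e2 → e1 ≠ e3 → e2 ≠ e3 →
    i ≤ loser t
  step_lazy : ∀ t : Fin n, LazyApplies T (lab t.1) (newE t) (loser t) (winner t) →
    lab (t.1+1) (newE t) = some (loser t)
  step_nonlazy : ∀ t : Fin n, ¬ LazyApplies T (lab t.1) (newE t) (loser t) (winner t) →
    lab (t.1+1) (newE t) = some (winner t)
  step_frame : ∀ (t : Fin n) (e : Sym2 (Fin (2*n+4))), e ≠ newE t → lab (t.1+1) e = lab t.1 e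

/-- Number of rounds won by label `i`. -/
def Run.wins {n : ℕ} {T : PreTree (n+3) (2*n+4)} (R : Run n T) (i : Fin (n+3)) : ℕ :=
  (Finset.univ.filter fun t : Fin n => R.winner t = i).card

/-- The element of `Fin (n+3)` corresponding to the numeric label `m+1 ∈ {1,…,n}`. -/
def lbl {n : ℕ} (m : Fin n) : Fin (n+3) := ⟨(m:ℕ)+3, by omega⟩

/-- `T ∈ Tour(k₁,…,kₙ)`. -/
def InTour {n : ℕ} (k : Fin n → ℕ) (T : PreTree (n+3) (2*n+4)) : Prop :=
  T.IsTrivalent ∧ T.ABAdj ∧ ∃ R : Run n T, ∀ m : Fin n, R.wins (lbl m) = k m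

/-- `|Tour(k₁,…,kₙ)|` (isomorphism classes). -/
noncomputable def TourCount {n : ℕ} (k : Fin n → ℕ) : ℕ := classCount (InTour k)

/-- `T'` is obtained from `T` by deleting the largest leaf and suppressing
the resulting degree-2 vertex `w`. -/
def DelLast (n : ℕ) (T : PreTree ((n+1)+3) (2*(n+1)+4)) (T' : PreTree (n+3) (2*n+4)) : Prop :=
  ∃ (g : Fin (2*n+4) → Fin (2*(n+1)+4)) (w : Fin (2*(n+1)+4)),
    Function.Injective g ∧
    T.G.Adj (T.leaf (Fin.last (n+3))) w ∧
    (∀ v, v ∈ Set.range g ↔ (v ≠ T.leaf (Fin.last (n+3)) ∧ v ≠ w)) ∧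
    (∀ u u' : Fin (2*n+4), T'.G.Adj u u' ↔
      (T.G.Adj (g u) (g u') ∨ (T.G.Adj (g u) w ∧ T.G.Adj (g u') w ∧ g u ≠ g u'))) ∧
    (∀ i : Fin (n+3), g (T'.leaf i) = T.leaf (Fin.castSucc i))

/-- `T'` is obtained from `T` by successively deleting the leaves `r+1, …, n`. -/
inductive Restricts : (n : ℕ) → (r : ℕ) → PreTree (n+3) (2*n+4) → PreTree (r+3) (2*r+4) → Prop
  | refl (n : ℕ) (T : PreTree (n+3) (2*n+4)) : Restricts n n T T
  | step (n r : ℕ) (T : PreTree ((n+1)+3) (2*(n+1)+4)) (T1 : PreTree (n+3) (2*n+4))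
      (T2 : PreTree (r+3) (2*r+4)) :
      DelLast n T T1 → Restricts n r T1 T2 → Restricts (n+1) r T T2

/-- The composition `k̃_j`: decrement `k j` and delete position `dpos`
(the rightmost zero of the result). -/
def tilde {n : ℕ} (k : Fin (n+1) → ℕ) (dpos : ℕ) (j : Fin (n+1)) : Fin n → ℕ :=
  fun m => if (m:ℕ) < dpos then Function.update k j (k j - 1) (Fin.castSucc m)
           else Function.update k j (k j - 1) (Fin.succ m)

/-- The map `π_lazy` relates `T` to the pair `(j, T')` where `j` is the winner of the
first round of the tournament, the two leaves that competed are deleted (the shared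
vertex becoming a new leaf) and the labels are shifted according to the (non)lazy case. -/
def PiLazyRel (n : ℕ) (k : Fin (n+1) → ℕ) (T : PreTree ((n+1)+3) (2*(n+1)+4))
    (j : Fin (n+1)) (T' : PreTree (n+3) (2*n+4)) : Prop :=
  ∃ (R : Run (n+1) T) (g : Fin (2*n+4) → Fin (2*(n+1)+4)),
    (∀ m : Fin (n+1), R.wins (lbl m) = k m) ∧
    R.winner ⟨0, Nat.succ_pos n⟩ = lbl j ∧
    Function.Injective g ∧
    (∀ v, v ∈ Set.range g ↔
      (v ≠ T.leaf (R.loser ⟨0, Nat.succ_pos n⟩) ∧ v ≠ T.leaf (R.winner ⟨0, Nat.succ_pos n⟩))) ∧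
    (∀ u u' : Fin (2*n+4), T'.G.Adj u u' ↔ T.G.Adj (g u) (g u')) ∧
    (if k j = 1 then
      ∀ β : Fin (n+3), g (T'.leaf β) =
        (if (β:ℕ) = ((R.loser ⟨0, Nat.succ_pos n⟩) : ℕ) then R.vtx ⟨0, Nat.succ_pos n⟩
         else if (β:ℕ) < ((R.winner ⟨0, Nat.succ_pos n⟩) : ℕ) then T.leaf (Fin.castSucc β)
         else T.leaf (Fin.succ β))
     else
      ∀ β : Fin (n+3), g (T'.leaf β) =
        (if (β:ℕ) < ((R.loser ⟨0, Nat.succ_pos n⟩) : ℕ) then T.leaf (Fin.castSucc β)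
         else if (β:ℕ)+1 = ((R.winner ⟨0, Nat.succ_pos n⟩) : ℕ) then R.vtx ⟨0, Nat.succ_pos n⟩
         else T.leaf (Fin.succ β)))

/-! ### Parking functions.
A parking function of size `n` is encoded by `col : Fin n → Fin n`, where `col x` is the
(0-indexed) column of the label `x+1`; the Dyck path condition (for paths from `(0,n)` to
`(n,0)` staying weakly above the diagonal, cells left of down steps) is `IsPF`. -/

def IsPF {n : ℕ} (col : Fin n → Fin n) : Prop :=
  ∀ j : Fin n, n - (j:ℕ) ≤ (Finset.univ.filter fun x => j ≤ col x).card

/-- Dominance index of label `x+1`: the number of columns strictly to its right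
containing no entry greater than `x+1` (empty columns count). -/
def domIdx {n : ℕ} (col : Fin n → Fin n) (x : Fin n) : ℕ :=
  (Finset.univ.filter fun j : Fin n => col x < j ∧ ∀ y, col y = j → y ≤ x).card

/-- Column-restricted: `x > d_x` for all labels `x` (label `x : Fin n` has value `x+1`). -/
def ColRes {n : ℕ} (col : Fin n → Fin n) : Prop := ∀ x : Fin n, domIdx col x < (x:ℕ) + 1

/-- Number of labels in column `j`. -/
def colCount {n : ℕ} (col : Fin n → Fin n) (j : Fin n) : ℕ :=
  (Finset.univ.filter fun x => col x = j).card

/-- `col'` is the image of `col` under the map `r`: remove the row containing the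
label `1`, decrement the remaining labels, and delete the rightmost empty column `E`. -/
def RSpec {n : ℕ} (col : Fin (n+1) → Fin (n+1)) (col' : Fin n → Fin n) : Prop :=
  ∃ E : Fin (n+1),
    (∀ y : Fin (n+1), y ≠ 0 → col y ≠ E) ∧
    (∀ j : Fin (n+1), (∀ y, y ≠ 0 → col y ≠ j) → j ≤ E) ∧
    (∀ x : Fin n, (col' x : ℕ) =
      if (col (Fin.succ x) : ℕ) < (E:ℕ) then (col (Fin.succ x) : ℕ)
      else (col (Fin.succ x) : ℕ) - 1)

/-- `col` is the parking function `τ(T)`: column `col m` contains label `m+1`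
iff the label `col m + 1` wins round `m+1` of the lazy tournament of `T`. -/
def TauRel {n : ℕ} (T : PreTree (n+3) (2*n+4)) (col : Fin n → Fin n) : Prop :=
  ∃ R : Run n T, ∀ t : Fin n, ((R.winner t) : ℕ) = (col t : ℕ) + 3

/-
Compare two consecutive rounds `s` and `s + 1`: between them only the edge `E = newE s` got a
label. If neither edge of round `s + 1` is `E`, its pair was already available in round `s`, so
the maximality rule bounds its loser by `loser s`. If `E` is the loser edge of round `s + 1`, the
round-`s` laziness rule must have fired (otherwise the winner edge of round `s + 1` would have
triggered it), so `E` carries `loser s` and the losers agree. If `E` is the winner edge, either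
`loser s` advanced and now wins, or `winner s` advanced, in which case the failed laziness rule
bounds the new loser by `loser s`.
-/

namespace Run

variable {n : ℕ} {T : PreTree (n+3) (2*n+4)} (R : Run n T)

open Classical in
lemma lab_succ_newE (s : Fin n) :
    R.lab (s.1+1) (R.newE s) = some (if LazyApplies T (R.lab s.1) (R.newE s) (R.loser s)
      (R.winner s) then R.loser s else R.winner s) := by
  split_ifs with hl
  · exact R.step_lazy s hl
  · exact R.step_nonlazy s hl

lemma le_loser_of_not_lazyApplies {s : Fin n}
    (hl : ¬ LazyApplies T (R.lab s.1) (R.newE s) (R.loser s) (R.winner s))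
    {e : Sym2 (Fin (2*n+4))} {u : Fin (n+3)} {v : Fin (2*n+4)} (he : e ∈ T.G.edgeSet)
    (hve : v ∈ e) (hvE : v ∈ R.newE s) (heE : e ≠ R.newE s) (hu : R.lab s.1 e = some u)
    (huw : u ≠ R.winner s) : u ≤ R.loser s :=
  le_of_not_gt fun hlt => hl ⟨e, u, v, he, hve, hvE, heE, hu, huw, hlt⟩

section Consecutive

variable {s s' : Fin n} (hs : s'.1 = s.1 + 1)
include hs

lemma lab_of_ne_newE {e : Sym2 (Fin (2*n+4))} (he : e ≠ R.newE s) :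
    R.lab s.1 e = R.lab s'.1 e := by
  rw [hs, R.step_frame s e he]

lemma newE_ne_newE : R.newE s' ≠ R.newE s := by
  intro h
  have := R.newE_unlabeled s'
  rw [hs, h, R.lab_succ_newE] at this
  exact Option.some_ne_none _ this

lemma loser_succ_eq_of_loserE_eq (h : R.loserE s' = R.newE s) : R.loser s' = R.loser s := by
  have hlab := R.lab_loserE s'
  rw [hs, h, R.lab_succ_newE, Option.some_inj] at hlab
  split_ifs at hlab with hl
  · exact hlab.symm
  · have hwE : R.winnerE s' ≠ R.newE s := h ▸ (R.edges_distinct s').1.symm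
    have hlw := R.lt_lw s'
    have hle := R.le_loser_of_not_lazyApplies hl (R.winnerE_mem s') (R.vtx_mem s').2.1
      (h ▸ (R.vtx_mem s').1) hwE ((R.lab_of_ne_newE hs hwE).trans (R.lab_winnerE s'))
      (hlab ▸ hlw.ne')
    exact absurd ((R.lt_lw s).trans (hlab ▸ hlw)) hle.not_gt

lemma loser_succ_le_of_winnerE_eq (h : R.winnerE s' = R.newE s) (hl : R.loserE s' ≠ R.newE s) :
    R.loser s' ≤ R.loser s := by
  have hlab := R.lab_winnerE s'
  rw [hs, h, R.lab_succ_newE, Option.some_inj] at hlab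
  split_ifs at hlab with hlazy
  · exact (hlab ▸ R.lt_lw s').le
  · exact R.le_loser_of_not_lazyApplies hlazy (R.loserE_mem s') (R.vtx_mem s').1
      (h ▸ (R.vtx_mem s').2.1) hl ((R.lab_of_ne_newE hs hl).trans (R.lab_loserE s'))
      (hlab ▸ (R.lt_lw s').ne)

lemma loser_succ_le_of_ne (hl : R.loserE s' ≠ R.newE s) (hw : R.winnerE s' ≠ R.newE s) :
    R.loser s' ≤ R.loser s := by
  obtain ⟨hvl, hvw, hvn⟩ := R.vtx_mem s'
  obtain ⟨hlw, hln, hwn⟩ := R.edges_distinct s'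
  have hn : R.lab s.1 (R.newE s') = none :=
    (R.lab_of_ne_newE hs (R.newE_ne_newE hs)).trans (R.newE_unlabeled s')
  exact R.max_rule s _ _ _ _ _ _ (R.loserE_mem s') (R.winnerE_mem s') (R.newE_mem s')
    ((R.lab_of_ne_newE hs hl).trans (R.lab_loserE s'))
    ((R.lab_of_ne_newE hs hw).trans (R.lab_winnerE s')) hn (R.lt_lw s')
    hvl hvw hvn hlw hln hwn

lemma loser_succ_le : R.loser s' ≤ R.loser s := by
  by_cases hl : R.loserE s' = R.newE s
  · exact (R.loser_succ_eq_of_loserE_eq hs hl).le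
  by_cases hw : R.winnerE s' = R.newE s
  · exact R.loser_succ_le_of_winnerE_eq hs hw hl
  · exact R.loser_succ_le_of_ne hs hl hw

end Consecutive

lemma antitone_loser : Antitone R.loser := by
  cases n with
  | zero => exact fun t => t.elim0
  | succ m => exact Fin.antitone_iff_succ_le.2 fun i => R.loser_succ_le rfl

end Run

theorem losers_decrease_general (n : ℕ) (T : PreTree (n+3) (2*n+4))
    (R : Run n T) : ∀ t t' : Fin n, t ≤ t' → R.loser t' ≤ R.loser t :=
  fun _ _ h => R.antitone_loser h

/-- The sequence of losers of the lazy tournament is weakly decreasing. -/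
theorem losers_decrease (n : ℕ) (T : PreTree (n+3) (2*n+4)) (hT : T.IsTrivalent)
    (R : Run n T) : ∀ t t' : Fin n, t ≤ t' → R.loser t' ≤ R.loser t :=
  losers_decrease_general n T R
end

section
/- If (k_1,...,k_n) is a weak composition of n with |Tour(k_1,...,k_n)| nonzero (equivalently Tour(k_1,...,k_n) nonempty), then (k_1,...,k_n) is a reverse Catalan sequence: for every 1 ≤ i ≤ n, k_n + k_{n-1} + ··· + k_{n-i+1} ≥ i. -/
open SimpleGraph

/-!
In every round one of the two players is eliminated: the label that is not copied onto the new
edge. Call a vertex pending while it touches an unlabelled edge. No labelled edge ever joins two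
pending vertices, so after a round the players' old edges no longer touch a pending vertex; hence
each label sits on at most one labelled edge at a pending vertex, and an eliminated label never
plays again. Since the `k_i` sum to `n`, every round is won by one of `1, …, n`, and `a`, `b`,
whose leaves share a vertex, never play. So the rounds won by labels `≤ s` eliminate distinct
labels among `c, 1, …, s`, all different from the survivor of the last such round: there are at
most `s` of them, and the labels `s+1, …, n` win at least `n - s` rounds.
-/

namespace SimpleGraph

variable {V : Type*} {G : SimpleGraph V}

theorem exists_adj_eq_mk_of_mem_edgeSet {e : Sym2 V} {v : V} (he : e ∈ G.edgeSet) (hv : v ∈ e) :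
    ∃ x, G.Adj v x ∧ e = s(v, x) := by
  obtain ⟨x, rfl⟩ := Sym2.mem_iff_exists.mp hv
  exact ⟨x, he, rfl⟩

theorem eq_of_adj_of_degree_eq_one {v x y : V} [Fintype (G.neighborSet v)] (hv : G.degree v = 1)
    (hx : G.Adj v x) (hy : G.Adj v y) : x = y :=
  (degree_eq_one_iff_existsUnique_adj.mp hv).unique hx hy

theorem eq_or_eq_or_eq_of_degree_le_three {v : V} [Fintype (G.neighborSet v)]
    (hv : G.degree v ≤ 3) {e₁ e₂ e₃ f : Sym2 V} (h₁ : e₁ ∈ G.incidenceSet v)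
    (h₂ : e₂ ∈ G.incidenceSet v) (h₃ : e₃ ∈ G.incidenceSet v)
    (h₁₂ : e₁ ≠ e₂) (h₁₃ : e₁ ≠ e₃) (h₂₃ : e₂ ≠ e₃) (hf : f ∈ G.incidenceSet v) :
    f = e₁ ∨ f = e₂ ∨ f = e₃ := by
  classical
  have hsub : {e₁, e₂, e₃} ⊆ G.incidenceFinset v := by
    simp [Finset.insert_subset_iff, h₁, h₂, h₃]
  have heq := Finset.eq_of_subset_of_card_le hsub <| by
    rw [card_incidenceFinset_eq_degree, Finset.card_eq_three.mpr ⟨_, _, _, h₁₂, h₁₃, h₂₃, rfl⟩]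
    exact hv
  simpa [← heq] using (mem_incidenceFinset (G := G) (v := v) f).mpr hf

end SimpleGraph

namespace PreTree.IsTrivalent

variable {L V : ℕ} {T : PreTree L V}

theorem degree_le_three (hT : T.IsTrivalent) (v : Fin V) : T.G.degree v ≤ 3 := by
  rcases hT.2.1 v with h | h <;> omega

theorem eq_of_adj_leaf (hT : T.IsTrivalent) {i : Fin L} {x y : Fin V}
    (hx : T.G.Adj (T.leaf i) x) (hy : T.G.Adj (T.leaf i) y) : x = y :=
  SimpleGraph.eq_of_adj_of_degree_eq_one (hT.2.2.2.1 i) hx hy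

end PreTree.IsTrivalent

namespace Run

open Finset

variable {n : ℕ} {T : PreTree (n+3) (2*n+4)} (R : Run n T)

theorem lab_zero_of_leaf_mem {e : Sym2 (Fin (2*n+4))} {i : Fin (n+3)} (he : e ∈ T.G.edgeSet)
    (hi : T.leaf i ∈ e) : R.lab 0 e = some i := by
  obtain ⟨x, hx, rfl⟩ := SimpleGraph.exists_adj_eq_mk_of_mem_edgeSet he hi
  exact R.init_leaf i x hx

theorem exists_eq_mk_leaf_of_lab_zero {e : Sym2 (Fin (2*n+4))} {u : Fin (n+3)}
    (h : R.lab 0 e = some u) : ∃ x, T.G.Adj (T.leaf u) x ∧ e = s(T.leaf u, x) := by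
  have he : e ∈ T.G.edgeSet := by
    by_contra hne
    simp [R.init_nonedge e hne] at h
  obtain ⟨i, hi⟩ : ∃ i, T.leaf i ∈ e := by
    by_contra! hne
    simp [R.init_other e hne] at h
  obtain rfl : u = i := Option.some_injective _ (h.symm.trans (R.lab_zero_of_leaf_mem he hi))
  exact SimpleGraph.exists_adj_eq_mk_of_mem_edgeSet he hi

theorem lab_succ_of_lab_eq_some (t : Fin n) {e : Sym2 (Fin (2*n+4))} {u : Fin (n+3)}
    (h : R.lab t e = some u) : R.lab (t + 1) e = some u := by
  have hne : e ≠ R.newE t := by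
    rintro rfl
    simp [R.newE_unlabeled t] at h
  rwa [R.step_frame t e hne]

theorem lab_eq_some_of_le {t t' : ℕ} (htt' : t ≤ t') (ht' : t' ≤ n) {e : Sym2 (Fin (2*n+4))}
    {u : Fin (n+3)} (h : R.lab t e = some u) : R.lab t' e = some u := by
  induction t', htt' using Nat.le_induction with
  | base => exact h
  | succ m _ ih => exact R.lab_succ_of_lab_eq_some ⟨m, by omega⟩ (ih (by omega))

open Classical in
noncomputable def survivor (t : Fin n) : Fin (n+3) :=
  if LazyApplies T (R.lab t) (R.newE t) (R.loser t) (R.winner t) then R.loser t else R.winner t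

open Classical in
noncomputable def eliminated (t : Fin n) : Fin (n+3) :=
  if LazyApplies T (R.lab t) (R.newE t) (R.loser t) (R.winner t) then R.winner t else R.loser t

theorem lab_succ_newE_s13 (t : Fin n) : R.lab (t + 1) (R.newE t) = some (R.survivor t) := by
  unfold survivor
  split_ifs with h
  exacts [R.step_lazy t h, R.step_nonlazy t h]

theorem survivor_ne_eliminated (t : Fin n) : R.survivor t ≠ R.eliminated t := by
  have := (R.lt_lw t).ne
  unfold survivor eliminated
  split_ifs <;> tauto

theorem survivor_eq_or (t : Fin n) : R.survivor t = R.loser t ∨ R.survivor t = R.winner t := by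
  unfold survivor
  split_ifs <;> simp

theorem eliminated_eq_or (t : Fin n) :
    R.eliminated t = R.loser t ∨ R.eliminated t = R.winner t := by
  unfold eliminated
  split_ifs <;> simp

theorem eq_loserE_or_winnerE_or_newE (hT : T.IsTrivalent) (t : Fin n) {f : Sym2 (Fin (2*n+4))}
    (hf : f ∈ T.G.edgeSet) (hv : R.vtx t ∈ f) :
    f = R.loserE t ∨ f = R.winnerE t ∨ f = R.newE t :=
  SimpleGraph.eq_or_eq_or_eq_of_degree_le_three (hT.degree_le_three _)
    ⟨R.loserE_mem t, (R.vtx_mem t).1⟩ ⟨R.winnerE_mem t, (R.vtx_mem t).2.1⟩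
    ⟨R.newE_mem t, (R.vtx_mem t).2.2⟩ (R.edges_distinct t).1 (R.edges_distinct t).2.1
    (R.edges_distinct t).2.2 ⟨hf, hv⟩

def Pending (t : ℕ) (v : Fin (2*n+4)) : Prop :=
  ∃ e ∈ T.G.edgeSet, R.lab t e = none ∧ v ∈ e

theorem pending_of_le {t t' : ℕ} (htt' : t ≤ t') (ht' : t' ≤ n) {v : Fin (2*n+4)}
    (h : R.Pending t' v) : R.Pending t v := by
  obtain ⟨e, he, hnone, hv⟩ := h
  refine ⟨e, he, ?_, hv⟩
  cases hlab : R.lab t e with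
  | none => rfl
  | some u => simp [R.lab_eq_some_of_le htt' ht' hlab] at hnone

theorem pending_vtx (t : Fin n) : R.Pending t (R.vtx t) :=
  ⟨R.newE t, R.newE_mem t, R.newE_unlabeled t, (R.vtx_mem t).2.2⟩

theorem not_pending_leaf {t : ℕ} (ht : t ≤ n) (i : Fin (n+3)) : ¬ R.Pending t (T.leaf i) := by
  rintro ⟨e, he, hnone, hi⟩
  simp [R.lab_eq_some_of_le (Nat.zero_le t) ht (R.lab_zero_of_leaf_mem he hi)] at hnone

theorem not_pending_succ_vtx (hT : T.IsTrivalent) (t : Fin n) :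
    ¬ R.Pending (t + 1) (R.vtx t) := by
  rintro ⟨f, hf, hnone, hv⟩
  rcases R.eq_loserE_or_winnerE_or_newE hT t hf hv with rfl | rfl | rfl
  · simp [R.lab_succ_of_lab_eq_some t (R.lab_loserE t)] at hnone
  · simp [R.lab_succ_of_lab_eq_some t (R.lab_winnerE t)] at hnone
  · simp [R.lab_succ_newE_s13 t] at hnone

/-- Pending vertices only disappear, and the edge labelled in round `t` ends at `vtx t`, which is
no longer pending afterwards. -/
theorem exists_not_pending_of_lab_eq_some (hT : T.IsTrivalent) {t : ℕ} (ht : t ≤ n)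
    {e : Sym2 (Fin (2*n+4))} {u : Fin (n+3)} (h : R.lab t e = some u) :
    ∃ v ∈ e, ¬ R.Pending t v := by
  induction t with
  | zero =>
    obtain ⟨x, -, rfl⟩ := R.exists_eq_mk_leaf_of_lab_zero h
    exact ⟨T.leaf u, Sym2.mem_mk_left _ _, R.not_pending_leaf ht u⟩
  | succ t ih =>
    set r : Fin n := ⟨t, by omega⟩
    by_cases he : e = R.newE r
    · exact ⟨R.vtx r, he ▸ (R.vtx_mem r).2.2, R.not_pending_succ_vtx hT r⟩
    · rw [R.step_frame r e he] at h
      obtain ⟨v, hv, hnp⟩ := ih (by omega) h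
      exact ⟨v, hv, fun hp => hnp (R.pending_of_le (Nat.le_succ t) ht hp)⟩

def BoundaryEdge (t : ℕ) (u : Fin (n+3)) (e : Sym2 (Fin (2*n+4))) : Prop :=
  R.lab t e = some u ∧ ∃ v ∈ e, R.Pending t v

def Alive (t : ℕ) (u : Fin (n+3)) : Prop :=
  ∃ e, R.BoundaryEdge t u e

theorem exists_boundaryEdge_of_plays (t : Fin n) {p : Fin (n+3)}
    (hp : p = R.loser t ∨ p = R.winner t) : ∃ e, R.BoundaryEdge t p e ∧ R.vtx t ∈ e := by
  rcases hp with rfl | rfl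
  · exact ⟨_, ⟨R.lab_loserE t, _, (R.vtx_mem t).1, R.pending_vtx t⟩, (R.vtx_mem t).1⟩
  · exact ⟨_, ⟨R.lab_winnerE t, _, (R.vtx_mem t).2.1, R.pending_vtx t⟩, (R.vtx_mem t).2.1⟩

theorem boundaryEdge_of_succ (t : Fin n) {u : Fin (n+3)} {e : Sym2 (Fin (2*n+4))}
    (h : R.BoundaryEdge (t + 1) u e) (hne : e ≠ R.newE t) : R.BoundaryEdge t u e := by
  obtain ⟨hlab, v, hv, hp⟩ := h
  exact ⟨by rwa [R.step_frame t e hne] at hlab, v, hv, R.pending_of_le (Nat.le_succ _) t.2 hp⟩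

theorem not_boundaryEdge_succ_of_vtx_mem (hT : T.IsTrivalent) (t : Fin n)
    {e : Sym2 (Fin (2*n+4))} {u u' : Fin (n+3)} (hlab : R.lab t e = some u)
    (hvtx : R.vtx t ∈ e) : ¬ R.BoundaryEdge (t + 1) u' e := by
  rintro ⟨-, v, hv, hp⟩
  have hne : R.vtx t ≠ v := fun h => R.not_pending_succ_vtx hT t (h ▸ hp)
  obtain ⟨w, hw, hnp⟩ := R.exists_not_pending_of_lab_eq_some hT t.2.le hlab
  rw [(Sym2.mem_and_mem_iff hne).mp ⟨hvtx, hv⟩] at hw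
  rcases Sym2.mem_iff.mp hw with rfl | rfl
  · exact hnp (R.pending_vtx t)
  · exact hnp (R.pending_of_le (Nat.le_succ _) t.2 hp)

theorem eq_newE_of_boundaryEdge_succ (hT : T.IsTrivalent) (t : Fin n) {p : Fin (n+3)}
    (huniq : ∀ e f, R.BoundaryEdge t p e → R.BoundaryEdge t p f → e = f)
    (hp : p = R.loser t ∨ p = R.winner t) {e : Sym2 (Fin (2*n+4))}
    (he : R.BoundaryEdge (t + 1) p e) : e = R.newE t := by
  by_contra hne
  obtain ⟨f, hf, hvtx⟩ := R.exists_boundaryEdge_of_plays t hp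
  obtain rfl := huniq _ _ (R.boundaryEdge_of_succ t he hne) hf
  exact R.not_boundaryEdge_succ_of_vtx_mem hT t hf.1 hvtx he

theorem boundaryEdge_unique (hT : T.IsTrivalent) {t : ℕ} (ht : t ≤ n) {u : Fin (n+3)}
    {e f : Sym2 (Fin (2*n+4))} (he : R.BoundaryEdge t u e) (hf : R.BoundaryEdge t u f) :
    e = f := by
  induction t generalizing u e f with
  | zero =>
    obtain ⟨x, hx, rfl⟩ := R.exists_eq_mk_leaf_of_lab_zero he.1
    obtain ⟨y, hy, rfl⟩ := R.exists_eq_mk_leaf_of_lab_zero hf.1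
    rw [hT.eq_of_adj_leaf hx hy]
  | succ t ih =>
    set r : Fin n := ⟨t, by omega⟩
    have ih' : ∀ {u e f}, R.BoundaryEdge r u e → R.BoundaryEdge r u f → e = f :=
      ih (by omega)
    by_cases hu : u = R.survivor r
    · subst hu
      have hnew : ∀ {g}, R.BoundaryEdge (t + 1) (R.survivor r) g → g = R.newE r :=
        R.eq_newE_of_boundaryEdge_succ hT r (fun _ _ => ih') (R.survivor_eq_or r)
      rw [hnew he, hnew hf]
    · have hne : ∀ {g}, R.BoundaryEdge (t + 1) u g → g ≠ R.newE r := by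
        rintro g ⟨hg, -⟩ rfl
        exact hu (Option.some_injective _ (hg.symm.trans (R.lab_succ_newE_s13 r)))
      exact ih' (R.boundaryEdge_of_succ r he (hne he)) (R.boundaryEdge_of_succ r hf (hne hf))

theorem alive_of_succ (t : Fin n) {u : Fin (n+3)} (h : R.Alive (t + 1) u) : R.Alive t u := by
  obtain ⟨e, he⟩ := h
  by_cases hne : e = R.newE t
  · have hu : R.survivor t = u :=
      Option.some_injective _ ((R.lab_succ_newE_s13 t).symm.trans (hne ▸ he.1))
    obtain ⟨f, hf, -⟩ := R.exists_boundaryEdge_of_plays t (hu ▸ R.survivor_eq_or t)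
    exact ⟨f, hf⟩
  · exact ⟨e, R.boundaryEdge_of_succ t he hne⟩

theorem alive_of_le {t t' : ℕ} (htt' : t ≤ t') (ht' : t' ≤ n) {u : Fin (n+3)}
    (h : R.Alive t' u) : R.Alive t u := by
  induction t', htt' using Nat.le_induction with
  | base => exact h
  | succ m _ ih => exact ih (by omega) (R.alive_of_succ ⟨m, by omega⟩ h)

theorem not_alive_succ_eliminated (hT : T.IsTrivalent) (t : Fin n) :
    ¬ R.Alive (t + 1) (R.eliminated t) := by
  rintro ⟨e, he⟩
  have hnew := R.eq_newE_of_boundaryEdge_succ hT t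
    (fun _ _ => R.boundaryEdge_unique hT t.2.le) (R.eliminated_eq_or t) he
  have hlab := he.1
  rw [hnew, R.lab_succ_newE_s13] at hlab
  exact R.survivor_ne_eliminated t (Option.some_injective _ hlab)

theorem eliminated_ne_of_lt (hT : T.IsTrivalent) {t t' : Fin n} (htt' : t < t')
    {p : Fin (n+3)} (hp : p = R.loser t' ∨ p = R.winner t') : R.eliminated t ≠ p := by
  rintro rfl
  obtain ⟨e, he, -⟩ := R.exists_boundaryEdge_of_plays t' hp
  exact R.not_alive_succ_eliminated hT t (R.alive_of_le htt' t'.2.le ⟨e, he⟩)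

theorem eliminated_injective (hT : T.IsTrivalent) : Function.Injective R.eliminated := by
  intro t t' h
  by_contra hne
  rcases lt_or_gt_of_ne hne with hlt | hlt
  · exact R.eliminated_ne_of_lt hT hlt (R.eliminated_eq_or t') h
  · exact R.eliminated_ne_of_lt hT hlt (R.eliminated_eq_or t) h.symm

theorem lab_zero_or_survivor_of_lab_eq_some {t : ℕ} (ht : t ≤ n) {e : Sym2 (Fin (2*n+4))}
    {u : Fin (n+3)} (h : R.lab t e = some u) :
    R.lab 0 e = some u ∨ ∃ t' : Fin n, t'.1 < t ∧ R.survivor t' = u := by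
  induction t with
  | zero => exact Or.inl h
  | succ t ih =>
    set r : Fin n := ⟨t, by omega⟩
    by_cases he : e = R.newE r
    · rw [he, R.lab_succ_newE_s13 r] at h
      exact Or.inr ⟨r, Nat.lt_succ_self t, Option.some_injective _ h⟩
    · rw [R.step_frame r e he] at h
      rcases ih (by omega) h with h0 | ⟨t', ht', hs⟩
      exacts [Or.inl h0, Or.inr ⟨t', by omega, hs⟩]

theorem plays_of_adj_leaf_vtx (hT : T.IsTrivalent) (t : Fin n) {i : Fin (n+3)}
    (h : T.G.Adj (T.leaf i) (R.vtx t)) : R.loser t = i ∨ R.winner t = i := by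
  have hlab : R.lab t s(T.leaf i, R.vtx t) = some i :=
    R.lab_eq_some_of_le (Nat.zero_le _) t.2.le (R.init_leaf i _ h)
  rcases R.eq_loserE_or_winnerE_or_newE hT t h (Sym2.mem_mk_right _ _) with he | he | he <;>
    rw [he] at hlab
  · exact Or.inl (Option.some_injective _ ((R.lab_loserE t).symm.trans hlab))
  · exact Or.inr (Option.some_injective _ ((R.lab_winnerE t).symm.trans hlab))
  · simp [R.newE_unlabeled t] at hlab

theorem two_le_loser (hT : T.IsTrivalent) (hAB : T.ABAdj)
    (hwin : ∀ t, 3 ≤ (R.winner t : ℕ)) (t : Fin n) : 2 ≤ (R.loser t : ℕ) := by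
  obtain ⟨w, hw₀, hw₁⟩ := hAB
  obtain ⟨t, ht⟩ := t
  induction t using Nat.strong_induction_on with
  | _ t ih =>
  by_contra! hlt
  set r : Fin n := ⟨t, ht⟩
  -- no earlier round copied `a` or `b`, so the loser still sits on its leaf edge
  have hleaf : T.G.Adj (T.leaf (R.loser r)) (R.vtx r) := by
    rcases R.lab_zero_or_survivor_of_lab_eq_some ht.le (R.lab_loserE r) with h0 | ⟨t', ht', hs⟩
    · obtain ⟨x, hx, hex⟩ := R.exists_eq_mk_leaf_of_lab_zero h0
      have hv := (R.vtx_mem r).1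
      rw [hex] at hv
      rcases Sym2.mem_iff.mp hv with h | h
      · exact absurd (h ▸ R.pending_vtx r) (R.not_pending_leaf ht.le _)
      · rwa [h]
    · have h2 : 2 ≤ (R.survivor t' : ℕ) := by
        rcases R.survivor_eq_or t' with h | h <;> rw [h]
        exacts [ih t' ht' t'.2, (hwin t').trans' (by norm_num)]
      rw [hs] at h2
      omega
  have hvtx : R.vtx r = w := by
    rcases (show (R.loser r : ℕ) = 0 ∨ (R.loser r : ℕ) = 1 by omega) with h | h
    · rw [show R.loser r = 0 from Fin.ext h] at hleaf
      exact hT.eq_of_adj_leaf hleaf hw₀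
    · rw [show R.loser r = 1 from Fin.ext (h.trans (by simp))] at hleaf
      exact hT.eq_of_adj_leaf hleaf hw₁
  have hlose : ∀ i : Fin (n+3), (i : ℕ) < 3 → T.G.Adj (T.leaf i) w → R.loser r = i :=
    fun i hi h => (R.plays_of_adj_leaf_vtx hT r (hvtx ▸ h)).resolve_right
      fun h' => by have := hwin r; rw [h'] at this; omega
  have h01 := (hlose 0 (by simp) hw₀).symm.trans (hlose 1 (by simp) hw₁)
  simp at h01

@[simp]
theorem val_lbl (m : Fin n) : (lbl m : ℕ) = m + 3 := rfl

theorem lbl_injective : Function.Injective (lbl (n := n)) := fun a b h => by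
  simpa [Fin.ext_iff] using h

theorem sum_wins_lbl (s : ℕ) :
    ∑ m ∈ Finset.univ.filter (fun m : Fin n => s ≤ (m : ℕ)), R.wins (lbl m) =
      #{t | s + 3 ≤ (R.winner t : ℕ)} := by
  rw [← sum_image (f := R.wins) lbl_injective.injOn]
  unfold Run.wins
  rw [sum_card_fiberwise_eq_card_filter]
  congr 1
  ext t
  simp only [mem_filter, mem_univ, true_and, mem_image]
  constructor
  · rintro ⟨m, hm, hmt⟩
    simpa [← hmt] using hm
  · intro ht
    exact ⟨⟨R.winner t - 3, by omega⟩, Nat.le_sub_of_add_le ht,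
      Fin.ext (Nat.sub_add_cancel (le_of_add_le_right ht))⟩

theorem three_le_winner (h : ∑ m, R.wins (lbl m) = n) (t : Fin n) : 3 ≤ (R.winner t : ℕ) := by
  have hcard := R.sum_wins_lbl 0
  simp only [zero_le, filter_true, zero_add, h] at hcard
  exact card_filter_eq_iff.mp (by rw [← hcard, card_univ, Fintype.card_fin]) t (mem_univ t)

theorem card_filter_winner_lt_le (hT : T.IsTrivalent) (hlos : ∀ t, 2 ≤ (R.loser t : ℕ))
    (s : ℕ) : #{t | (R.winner t : ℕ) < s + 3} ≤ s := by
  set S : Finset (Fin n) := {t | (R.winner t : ℕ) < s + 3}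
  rcases S.eq_empty_or_nonempty with hS | hS
  · simp [hS]
  set t₀ := S.max' hS
  have hplays : ∀ t ∈ S, ∀ p, p = R.loser t ∨ p = R.winner t → (p : ℕ) ∈ Icc 2 (s + 2) := by
    intro t ht p hp
    have := (mem_filter.mp ht).2
    have := hlos t
    have : (R.loser t : ℕ) < R.winner t := R.lt_lw t
    rcases hp with rfl | rfl <;> simp only [mem_Icc] <;> omega
  calc #S ≤ #((Icc 2 (s + 2)).erase (R.survivor t₀ : ℕ)) := by
        refine card_le_card_of_injOn (fun t => (R.eliminated t : ℕ)) (fun t ht => ?_)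
          (Fin.val_injective.comp (R.eliminated_injective hT)).injOn
        refine mem_erase.mpr ⟨fun h => ?_, hplays t ht _ (R.eliminated_eq_or t)⟩
        rcases (S.le_max' t ht).lt_or_eq with hlt | heq
        · exact R.eliminated_ne_of_lt hT hlt (R.survivor_eq_or t₀) (Fin.val_injective h)
        · rw [heq] at h
          exact R.survivor_ne_eliminated t₀ (Fin.val_injective h).symm
    _ = s := by
        rw [card_erase_of_mem (hplays _ (S.max'_mem hS) _ (R.survivor_eq_or _)), Nat.card_Icc]
        omega

end Run

/-- If `Tour(k₁,…,kₙ)` is nonempty then `k` is a reverse Catalan sequence: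
`k_n + k_{n-1} + ⋯ + k_{n-i+1} ≥ i` for every `1 ≤ i ≤ n`. -/
theorem tour_reverse_catalan (n : ℕ) (k : Fin n → ℕ) (hk : ∑ m, k m = n)
    (h : ∃ T : PreTree (n+3) (2*n+4), InTour k T) :
    ∀ i : ℕ, 1 ≤ i → i ≤ n →
      i ≤ ∑ m ∈ Finset.univ.filter (fun m : Fin n => n - i ≤ (m:ℕ)), k m := by
  obtain ⟨T, hT, hAB, R, hwins⟩ := h
  intro i _ hin
  have hwin : ∀ t, 3 ≤ (R.winner t : ℕ) := R.three_le_winner (by simpa only [hwins] using hk)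
  have hsmall := R.card_filter_winner_lt_le hT (R.two_le_loser hT hAB hwin) (n - i)
  have hsplit := Finset.card_filter_add_card_filter_not (s := Finset.univ)
    (fun t : Fin n => n - i + 3 ≤ (R.winner t : ℕ))
  simp only [not_le, Finset.card_univ, Fintype.card_fin] at hsplit
  rw [← Finset.sum_congr rfl (fun m _ => hwins m), R.sum_wins_lbl (n - i)]
  omega
end
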